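/- For integer $M \ge 1$ and $y \ge 0$, the regularized lower incomplete gamma function satisfies $P(M, y) := 1 - \frac{\Gamma(M,y)}{(M-1)!} \ge \left(1 - e^{-(M!)^{-1/M} y}\right)^M$, with equality for $M = 1$. -/

import Mathlib

open Real

/-- Upper incomplete gamma function of integer order `M ≥ 1`. -/
noncomputable def upperGamma (M : ℕ) (y : ℝ) : ℝ :=
  ∫ t in Set.Ioi y, t ^ (M - 1) * Real.exp (-t)

/-!
Write `M = n + 1` and `d = (M!)^(-1/M)`. Both sides are distribution functions on `(0, ∞)`:
`P(M, y) = ∫₀^y tⁿ e^(-t) dt / n!`, and `(1 - e^(-dy))^M = ∫₀^y g` where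
`g t = M d e^(-dt) (1 - e^(-dt))ⁿ` (`expMaxDensity n d`) is the density of the maximum of `M`
independent exponential variables of rate `d`. The normalisation `M! dᴹ = 1` gives
`n! g t = tⁿ e^(-t) exp (φ t)` with `φ t = n ψ (d t) + (1 - d) t` and
`ψ x = log ((1 - e^(-x)) / x)`. As `ψ` is convex with `ψ (0⁺) = 0`, `ψ x / x` increases, hence so
does `φ t / t`: the gamma density lies above `g` up to some point and below it afterwards. For two
densities of total mass one crossing once in this way, the distribution functions are ordered.
-/

open Set Filter MeasureTheory Topology

theorem intervalIntegral_le_of_single_crossing {f g : ℝ → ℝ} {a y : ℝ} (hay : a ≤ y)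
    (hf : IntegrableOn f (Ioi a)) (hg : IntegrableOn g (Ioi a))
    (hfg : ∫ t in Ioi a, f t = ∫ t in Ioi a, g t)
    (hcross : ∀ ⦃s t⦄, a < s → s ≤ t → f s < g s → f t ≤ g t) :
    ∫ t in a..y, g t ≤ ∫ t in a..y, f t := by
  have hIoc : ∀ {u : ℝ → ℝ}, IntegrableOn u (Ioi a) → IntervalIntegrable u volume a y :=
    fun hu => (intervalIntegrable_iff_integrableOn_Ioc_of_le hay).2
      (hu.mono_set Ioc_subset_Ioi_self)
  by_cases hgf : ∀ t ∈ Ioo a y, g t ≤ f t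
  · exact intervalIntegral.integral_mono_on_of_le_Ioo hay (hIoc hg) (hIoc hf) hgf
  push Not at hgf
  obtain ⟨s, ⟨has, hsy⟩, hfgs⟩ := hgf
  have htail : ∫ t in Ioi y, f t ≤ ∫ t in Ioi y, g t :=
    setIntegral_mono_on (hf.mono_set (Ioi_subset_Ioi hay)) (hg.mono_set (Ioi_subset_Ioi hay))
      measurableSet_Ioi fun t ht => hcross has (hsy.le.trans ht.out.le) hfgs
  rw [← intervalIntegral.integral_Ioi_sub_Ioi hf hay,
    ← intervalIntegral.integral_Ioi_sub_Ioi hg hay, hfg]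
  exact sub_le_sub_left htail _

theorem ConvexOn.monotoneOn_div_of_tendsto_nhdsGT_zero {f : ℝ → ℝ} (hf : ConvexOn ℝ (Ioi 0) f)
    (h0 : Tendsto f (𝓝[>] 0) (𝓝 0)) : MonotoneOn (fun x => f x / x) (Ioi 0) := by
  intro s (hs : 0 < s) t (ht : 0 < t) hst
  have hsecant : ∀ x : ℝ, x ≠ 0 →
      Tendsto (fun ε => (f x - f ε) / (x - ε)) (𝓝[>] 0) (𝓝 (f x / x)) := fun x hx => by
    have : Tendsto (fun ε => (f x - f ε) / (x - ε)) (𝓝[>] 0) (𝓝 ((f x - 0) / (x - 0))) :=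
      (tendsto_const_nhds.sub h0).div
        (tendsto_const_nhds.sub (tendsto_nhdsWithin_of_tendsto_nhds tendsto_id)) (by rwa [sub_zero])
    simpa only [sub_zero] using this
  refine le_of_tendsto_of_tendsto (hsecant s hs.ne') (hsecant t ht.ne') ?_
  filter_upwards [Ioo_mem_nhdsGT hs] with ε hε
  exact hf.secant_mono hε.1 hs ht hε.2.ne' (hε.2.trans_le hst).ne' hst

theorem one_sub_exp_neg_pos {x : ℝ} (hx : 0 < x) : 0 < 1 - exp (-x) := by
  simpa using hx

theorem hasDerivAt_one_sub_exp_neg_mul (d t : ℝ) :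
    HasDerivAt (fun t => 1 - exp (-(d * t))) (d * exp (-(d * t))) t := by
  simpa [mul_comm] using ((hasDerivAt_id t).const_mul d).neg.exp.const_sub 1

theorem hasDerivAt_one_sub_exp_neg (x : ℝ) :
    HasDerivAt (fun t => 1 - exp (-t)) (exp (-x)) x := by
  simpa using hasDerivAt_one_sub_exp_neg_mul 1 x

theorem sq_mul_exp_neg_le_one_sub_exp_neg_sq {x : ℝ} (hx : 0 ≤ x) :
    x ^ 2 * exp (-x) ≤ (1 - exp (-x)) ^ 2 := by
  have hhalf : exp (-(x / 2)) ^ 2 = exp (-x) := by rw [← exp_nat_mul]; ring_nf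
  have hsinh : 1 - exp (-x) = exp (-(x / 2)) * (2 * sinh (x / 2)) := by
    rw [sinh_eq, ← hhalf, exp_neg (x / 2)]
    field_simp
  have hlin : x * exp (-(x / 2)) ≤ 1 - exp (-x) := by
    rw [hsinh, mul_comm]
    gcongr
    linarith [self_le_sinh_iff.2 (by positivity : 0 ≤ x / 2)]
  calc x ^ 2 * exp (-x) = (x * exp (-(x / 2))) ^ 2 := by rw [mul_pow, hhalf]
    _ ≤ (1 - exp (-x)) ^ 2 := by gcongr

theorem convexOn_log_one_sub_exp_neg_div :
    ConvexOn ℝ (Ioi 0) (fun x => log ((1 - exp (-x)) / x)) := by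
  have hderiv : ∀ x ∈ Ioi (0 : ℝ), HasDerivAt (fun x => log ((1 - exp (-x)) / x))
      (exp (-x) / (1 - exp (-x)) - x⁻¹) x := fun x (hx : 0 < x) => by
    have hE := one_sub_exp_neg_pos hx
    refine (((hasDerivAt_one_sub_exp_neg x).div (hasDerivAt_id' x) hx.ne').log
      (div_pos hE hx).ne').congr_deriv ?_
    simp only [Pi.div_apply]
    field_simp
  have hderiv2 : ∀ x ∈ Ioi (0 : ℝ), HasDerivAt (fun x => exp (-x) / (1 - exp (-x)) - x⁻¹)
      ((x ^ 2)⁻¹ - exp (-x) / (1 - exp (-x)) ^ 2) x := fun x (hx : 0 < x) => by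
    have hE := one_sub_exp_neg_pos hx
    refine (((hasDerivAt_id' x).neg.exp.div (hasDerivAt_one_sub_exp_neg x) hE.ne').sub
      (hasDerivAt_inv hx.ne')).congr_deriv ?_
    simp only [Pi.neg_apply]
    field_simp
    ring
  refine convexOn_of_hasDerivWithinAt2_nonneg (convex_Ioi 0)
    (fun x hx => (hderiv x hx).continuousAt.continuousWithinAt)
    (fun x hx => (hderiv x (interior_subset hx)).hasDerivWithinAt)
    (fun x hx => (hderiv2 x (interior_subset hx)).hasDerivWithinAt) fun x hx => ?_
  have hx : 0 < x := interior_subset hx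
  have hE := one_sub_exp_neg_pos hx
  rw [sub_nonneg, div_le_iff₀ (by positivity), inv_mul_eq_div, le_div_iff₀ (by positivity)]
  linarith [sq_mul_exp_neg_le_one_sub_exp_neg_sq hx.le]

theorem tendsto_log_one_sub_exp_neg_div :
    Tendsto (fun x => log ((1 - exp (-x)) / x)) (𝓝[>] 0) (𝓝 0) := by
  have hslope := (hasDerivAt_one_sub_exp_neg 0).tendsto_slope_zero_right
  simp only [zero_add, neg_zero, exp_zero, sub_self, sub_zero, smul_eq_mul] at hslope
  have hlog := (continuousAt_log one_ne_zero).tendsto.comp hslope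
  rw [log_one] at hlog
  refine hlog.congr fun x => ?_
  simp [div_eq_inv_mul]

theorem integrableOn_pow_mul_exp_neg_Ioi (n : ℕ) :
    IntegrableOn (fun t : ℝ => t ^ n * exp (-t)) (Ioi 0) := by
  simpa [mul_comm] using GammaIntegral_convergent (s := n + 1) (by positivity)

theorem integral_pow_mul_exp_neg_Ioi (n : ℕ) :
    ∫ t in Ioi (0 : ℝ), t ^ n * exp (-t) = n.factorial := by
  simpa [mul_comm, Gamma_nat_eq_factorial] using
    (Gamma_eq_integral (s := n + 1) (by positivity)).symm

theorem one_sub_upperGamma_div_factorial (n : ℕ) {y : ℝ} (hy : 0 ≤ y) :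
    1 - upperGamma (n + 1) y / n.factorial = (∫ t in 0..y, t ^ n * exp (-t)) / n.factorial := by
  rw [← intervalIntegral.integral_Ioi_sub_Ioi (integrableOn_pow_mul_exp_neg_Ioi n) hy,
    integral_pow_mul_exp_neg_Ioi, upperGamma, add_tsub_cancel_right]
  field_simp

noncomputable def expMaxDensity (n : ℕ) (d t : ℝ) : ℝ :=
  (n + 1) * d * exp (-(d * t)) * (1 - exp (-(d * t))) ^ n

theorem hasDerivAt_one_sub_exp_neg_mul_pow (n : ℕ) (d t : ℝ) :
    HasDerivAt (fun t => (1 - exp (-(d * t))) ^ (n + 1)) (expMaxDensity n d t) t := by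
  refine ((hasDerivAt_one_sub_exp_neg_mul d t).fun_pow (n + 1)).congr_deriv ?_
  simp only [expMaxDensity, Nat.cast_add, Nat.cast_one, add_tsub_cancel_right]
  ring

theorem expMaxDensity_nonneg (n : ℕ) {d t : ℝ} (hd : 0 < d) (ht : 0 < t) :
    0 ≤ expMaxDensity n d t := by
  have := one_sub_exp_neg_pos (mul_pos hd ht)
  unfold expMaxDensity
  positivity

theorem tendsto_one_sub_exp_neg_mul_pow_atTop (n : ℕ) {d : ℝ} (hd : 0 < d) :
    Tendsto (fun t => (1 - exp (-(d * t))) ^ (n + 1)) atTop (𝓝 1) := by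
  simpa using ((tendsto_exp_neg_atTop_nhds_zero.comp
    (tendsto_id.const_mul_atTop hd)).const_sub 1).pow (n + 1)

theorem integrableOn_expMaxDensity (n : ℕ) {d : ℝ} (hd : 0 < d) :
    IntegrableOn (expMaxDensity n d) (Ioi 0) :=
  integrableOn_Ioi_deriv_of_nonneg' (fun t _ => hasDerivAt_one_sub_exp_neg_mul_pow n d t)
    (fun _ ht => expMaxDensity_nonneg n hd ht) (tendsto_one_sub_exp_neg_mul_pow_atTop n hd)

theorem integral_expMaxDensity_Ioi (n : ℕ) {d : ℝ} (hd : 0 < d) :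
    ∫ t in Ioi 0, expMaxDensity n d t = 1 := by
  simpa using integral_Ioi_of_hasDerivAt_of_nonneg'
    (fun t _ => hasDerivAt_one_sub_exp_neg_mul_pow n d t)
    (fun _ ht => expMaxDensity_nonneg n hd ht) (tendsto_one_sub_exp_neg_mul_pow_atTop n hd)

theorem integral_expMaxDensity (n : ℕ) (d y : ℝ) :
    ∫ t in 0..y, expMaxDensity n d t = (1 - exp (-(d * y))) ^ (n + 1) := by
  rw [intervalIntegral.integral_eq_sub_of_hasDerivAt
    (fun t _ => hasDerivAt_one_sub_exp_neg_mul_pow n d t)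
    (Continuous.intervalIntegrable (by unfold expMaxDensity; fun_prop) _ _)]
  simp

theorem factorial_mul_expMaxDensity {n : ℕ} {d t : ℝ} (hd : 0 < d)
    (hfac : ((n + 1).factorial : ℝ) * d ^ (n + 1) = 1) (ht : 0 < t) :
    n.factorial * expMaxDensity n d t =
      t ^ n * exp (-t) * exp (n * log ((1 - exp (-(d * t))) / (d * t)) + (1 - d) * t) := by
  have hE := one_sub_exp_neg_pos (mul_pos hd ht)
  have hexp : exp ((1 - d) * t) = exp (-(d * t)) / exp (-t) := by rw [← exp_sub]; ring_nf
  rw [expMaxDensity, exp_add, exp_nat_mul, exp_log (div_pos hE (mul_pos hd ht)), div_pow, mul_pow,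
    hexp]
  rw [Nat.factorial_succ] at hfac
  push_cast at hfac
  field_simp
  linear_combination hfac

theorem pow_mul_exp_neg_le_factorial_mul_expMaxDensity_of_lt {n : ℕ} {d s t : ℝ} (hd : 0 < d)
    (hfac : ((n + 1).factorial : ℝ) * d ^ (n + 1) = 1) (hs : 0 < s) (hst : s ≤ t)
    (hlt : s ^ n * exp (-s) < n.factorial * expMaxDensity n d s) :
    t ^ n * exp (-t) ≤ n.factorial * expMaxDensity n d t := by
  set φ : ℝ → ℝ := fun t => n * log ((1 - exp (-(d * t))) / (d * t)) + (1 - d) * t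
  have ht : 0 < t := hs.trans_le hst
  have hφ_div : ∀ {u : ℝ}, 0 < u →
      φ u / u = n * d * (log ((1 - exp (-(d * u))) / (d * u)) / (d * u)) + (1 - d) := fun hu => by
    simp only [φ]
    field_simp
  have hsign : ∀ {u : ℝ}, 0 < u →
      (u ^ n * exp (-u) < n.factorial * expMaxDensity n d u ↔ 0 < φ u) := fun hu => by
    rw [factorial_mul_expMaxDensity hd hfac hu, lt_mul_iff_one_lt_right (by positivity),
        one_lt_exp_iff]
  have hmono : φ s / s ≤ φ t / t := by
    rw [hφ_div hs, hφ_div ht]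
    exact add_le_add_left (mul_le_mul_of_nonneg_left
      (convexOn_log_one_sub_exp_neg_div.monotoneOn_div_of_tendsto_nhdsGT_zero
        tendsto_log_one_sub_exp_neg_div (mul_pos hd hs) (mul_pos hd ht) (by gcongr))
      (by positivity)) _
  have hφt : 0 < φ t / t := (div_pos ((hsign hs).1 hlt) hs).trans_le hmono
  exact ((hsign ht).2 ((div_pos_iff_of_pos_right ht).1 hφt)).le

theorem one_sub_exp_neg_mul_pow_mul_factorial_le {n : ℕ} {d y : ℝ} (hd : 0 < d)
    (hfac : ((n + 1).factorial : ℝ) * d ^ (n + 1) = 1) (hy : 0 ≤ y) :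
    (1 - exp (-(d * y))) ^ (n + 1) * n.factorial ≤ ∫ t in 0..y, t ^ n * exp (-t) :=
  calc (1 - exp (-(d * y))) ^ (n + 1) * n.factorial
      = ∫ t in 0..y, n.factorial * expMaxDensity n d t := by
        rw [intervalIntegral.integral_const_mul, integral_expMaxDensity, mul_comm]
    _ ≤ ∫ t in 0..y, t ^ n * exp (-t) :=
        intervalIntegral_le_of_single_crossing hy (integrableOn_pow_mul_exp_neg_Ioi n)
          ((integrableOn_expMaxDensity n hd).const_mul _)
          (by rw [integral_const_mul, integral_expMaxDensity_Ioi n hd, integral_pow_mul_exp_neg_Ioi,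
            mul_one])
          fun _ _ hs hst hlt =>
            pow_mul_exp_neg_le_factorial_mul_expMaxDensity_of_lt hd hfac hs hst hlt

theorem mul_rpow_neg_one_div_pow {x : ℝ} (hx : 0 < x) {m : ℕ} (hm : m ≠ 0) :
    x * (x ^ (-(1 : ℝ) / m)) ^ m = 1 := by
  rw [neg_div, one_div, rpow_neg hx.le, inv_pow, rpow_inv_natCast_pow hx.le hm,
    mul_inv_cancel₀ hx.ne']

/-- DLMF 8.10.11 for integer order: the regularized lower incomplete gamma function
satisfies `P(M, y) = 1 - Γ(M,y)/(M-1)! ≥ (1 - e^{-(M!)^{-1/M} y})^M`, with equality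
for `M = 1`. -/
theorem regularized_gamma_lower_bound (M : ℕ) (hM : 1 ≤ M) (y : ℝ) (hy : 0 ≤ y) :
    (1 - Real.exp (-((Nat.factorial M : ℝ) ^ (-(1:ℝ)/M) * y))) ^ M
      ≤ 1 - upperGamma M y / (Nat.factorial (M - 1) : ℝ) ∧
    (M = 1 →
      (1 - Real.exp (-((Nat.factorial M : ℝ) ^ (-(1:ℝ)/M) * y))) ^ M
        = 1 - upperGamma M y / (Nat.factorial (M - 1) : ℝ)) := by
  obtain ⟨n, rfl⟩ := Nat.exists_eq_add_of_le' hM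
  refine ⟨?_, fun h => ?_⟩
  · rw [add_tsub_cancel_right, one_sub_upperGamma_div_factorial n hy, le_div_iff₀ (by positivity)]
    exact one_sub_exp_neg_mul_pow_mul_factorial_le (by positivity)
      (mul_rpow_neg_one_div_pow (by positivity) n.succ_ne_zero) hy
  · obtain rfl : n = 0 := by omega
    simp only [upperGamma, zero_add, tsub_self, pow_zero, pow_one, one_mul, Nat.factorial_zero,
      Nat.factorial_one, Nat.cast_one, one_rpow, div_one, integral_exp_neg_Ioi]
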